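/- The Hausdorffization of the line with two origins is the real line: the T2 quotient (Mathlib's `t2Quotient`) of R is homeomorphic to ℝ. -/

import Mathlib

/-- The setoid on `ℝ × Bool` defining the line with two origins:
`(x, i) ∼ (y, j)` iff `x = y` and (`i = j` or `x ≠ 0`). -/
def lineTwoOriginsSetoid : Setoid (ℝ × Bool) where
  r p q := p.1 = q.1 ∧ (p.2 = q.2 ∨ p.1 ≠ 0)
  iseqv := by
    constructor
    · intro p; exact ⟨rfl, Or.inl rfl⟩
    · rintro p q ⟨h1, h2 | h2⟩
      · exact ⟨h1.symm, Or.inl h2.symm⟩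
      · exact ⟨h1.symm, Or.inr (h1 ▸ h2)⟩
    · rintro p q r ⟨h1, h2⟩ ⟨k1, k2⟩
      refine ⟨h1.trans k1, ?_⟩
      rcases h2 with h2 | h2
      · rcases k2 with k2 | k2
        · exact Or.inl (h2.trans k2)
        · exact Or.inr (h1.symm ▸ k2)
      · exact Or.inr h2

/-- The line with two origins, with the quotient topology. -/
def LineTwoOrigins : Type := Quotient lineTwoOriginsSetoid

instance : TopologicalSpace LineTwoOrigins :=
  inferInstanceAs (TopologicalSpace (Quotient lineTwoOriginsSetoid))

namespace LTO

def mk (p : ℝ × Bool) : LineTwoOrigins := Quotient.mk lineTwoOriginsSetoid p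

lemma continuous_mk : Continuous mk := continuous_quotient_mk'

lemma continuous_curve (b : Bool) : Continuous (fun x : ℝ => mk (x, b)) :=
  continuous_mk.comp (continuous_id.prodMk continuous_const)

lemma key {Z : Type*} [TopologicalSpace Z] [T2Space Z] {g : LineTwoOrigins → Z}
    (hg : Continuous g) : g (mk (0, false)) = g (mk (0, true)) := by
  by_contra h
  obtain ⟨U, V, hU, hV, hgU, hgV, hUV⟩ := t2_separation h
  have hA : IsOpen ((fun x : ℝ => g (mk (x, false))) ⁻¹' U) :=
    (hg.comp (continuous_curve false)).isOpen_preimage U hU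
  have hB : IsOpen ((fun x : ℝ => g (mk (x, true))) ⁻¹' V) :=
    (hg.comp (continuous_curve true)).isOpen_preimage V hV
  have h0 : (0:ℝ) ∈ ((fun x : ℝ => g (mk (x, false))) ⁻¹' U) ∩
      ((fun x : ℝ => g (mk (x, true))) ⁻¹' V) := ⟨hgU, hgV⟩
  obtain ⟨ε, hε, hball⟩ := Metric.isOpen_iff.mp (hA.inter hB) 0 h0
  have hx : (ε/2) ∈ Metric.ball (0:ℝ) ε := by
    rw [Metric.mem_ball, Real.dist_eq, sub_zero, abs_of_pos (half_pos hε)]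
    linarith
  obtain ⟨hxU, hxV⟩ := hball hx
  have hne : (ε/2 : ℝ) ≠ 0 := by positivity
  have heq : mk (ε/2, false) = mk (ε/2, true) := Quotient.sound ⟨rfl, Or.inr hne⟩
  have hxV' : g (mk (ε/2, false)) ∈ V := by rw [heq]; exact hxV
  exact Set.disjoint_left.mp hUV hxU hxV'

def proj : LineTwoOrigins → ℝ := Quotient.lift (fun p => p.1) (fun _ _ h => h.1)

lemma continuous_proj : Continuous proj := continuous_quot_lift _ continuous_fst

end LTO

/-- The Hausdorffization (universal T2 quotient) of the line with two origins is
homeomorphic to the real line. -/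
theorem t2Quotient_lineTwoOrigins_homeomorph_real :
    Nonempty (T2Quotient LineTwoOrigins ≃ₜ ℝ) := by
  refine ⟨{
    toFun := T2Quotient.lift LTO.continuous_proj
    invFun := fun x => T2Quotient.mk (LTO.mk (x, true))
    left_inv := ?_
    right_inv := fun x => T2Quotient.lift_mk (f := LTO.proj) LTO.continuous_proj (LTO.mk (x, true))
    continuous_toFun := T2Quotient.continuous_lift LTO.continuous_proj
    continuous_invFun :=
      (T2Quotient.continuous_mk _).comp (LTO.continuous_curve true) }⟩
  intro q
  induction q using T2Quotient.inductionOn with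
  | h x =>
    induction x using Quotient.inductionOn with
    | h p =>
      obtain ⟨x, b⟩ := p
      erw [T2Quotient.lift_mk]
      show T2Quotient.mk (LTO.mk (x, true)) = T2Quotient.mk (LTO.mk (x, b))
      rcases eq_or_ne x 0 with rfl | hx
      · cases b
        · exact ((LTO.key (T2Quotient.continuous_mk _)).symm : _)
        · rfl
      · exact congrArg _ (Quotient.sound ⟨rfl, Or.inr hx⟩)
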